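/- Let f be a function in the Hardy space H²(D) of the unit disk. Then for every n ∈ ℕ, n ≥ 1, and every z ∈ D one has f(z) = Σ_{m=0}^{n-1} c_m(f)·φ_m(z) + B_n(z)·∫_T conj(B_n(t))·f(t)/(1 - z·conj(t)) dσ(t), where c_m(f) = ∫_T f(t)·conj(φ_m(t)) dσ(t), f on the unit circle T is understood via its nontangential boundary values, (φ_k) is the Takenaka–Malmquist system and B_n the associated Blaschke product. -/

import Mathlib

open Complex MeasureTheory Finset

/-- The unimodular factor `|c|/c`, set to `-1` when `c = 0`. -/
noncomputable def unitFactor (c : ℂ) : ℂ :=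
  if c = 0 then -1 else ((‖c‖ : ℝ) : ℂ) / c

/-- The Takenaka–Malmquist system generated by the sequence `a`. -/
noncomputable def TM (a : ℕ → ℂ) (k : ℕ) (z : ℂ) : ℂ :=
  ((Real.sqrt (1 - ‖a k‖ ^ 2) : ℝ) : ℂ) / (1 - (starRingEnd ℂ) (a k) * z) *
    ∏ j ∈ Finset.range k, (-(unitFactor (a j))) * ((z - a j) / (1 - (starRingEnd ℂ) (a j) * z))

/-- The Blaschke product of degree `k` associated with the sequence `a` (with `τ = 1`). -/
noncomputable def Blaschke (a : ℕ → ℂ) (k : ℕ) (z : ℂ) : ℂ :=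
  ∏ j ∈ Finset.range k, (z - a j) / (1 - (starRingEnd ℂ) (a j) * z)

/-- Integral over the unit circle with respect to the normalized Lebesgue measure σ
(complex-valued integrand). -/
noncomputable def circleAvg (f : ℂ → ℂ) : ℂ :=
  (1 / (2 * Real.pi) : ℂ) * ∫ θ in (0:ℝ)..(2 * Real.pi), f (Complex.exp (θ * Complex.I))

/-- Integral over the unit circle with respect to the normalized Lebesgue measure σ
(real-valued integrand). -/
noncomputable def circleAvgR (f : ℂ → ℝ) : ℝ :=
  (1 / (2 * Real.pi)) * ∫ θ in (0:ℝ)..(2 * Real.pi), f (Complex.exp (θ * Complex.I))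

/-- The Fourier coefficient `c_m(f)` of `f` in the Takenaka–Malmquist system. -/
noncomputable def fourierCoef (a : ℕ → ℂ) (f : ℂ → ℂ) (m : ℕ) : ℂ :=
  circleAvg (fun t => f t * (starRingEnd ℂ) (TM a m t))

/-- The weighted Bergman kernel `K_α(z; w) = 1/(1 - z·conj w)^(2+α)`. -/
noncomputable def bergman (α : ℕ) (w z : ℂ) : ℂ :=
  1 / (1 - z * (starRingEnd ℂ) w) ^ (2 + α)

/-- The partial sum `S_{n+1}(K_α)(z; w)` of the Fourier series of `K_α(·; w)` in the
Takenaka–Malmquist system. -/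
noncomputable def partialSum (a : ℕ → ℂ) (α : ℕ) (w : ℂ) (n : ℕ) (z : ℂ) : ℂ :=
  ∑ m ∈ Finset.range (n + 1), fourierCoef a (bergman α w) m * TM a m z

/-! The Christoffel–Darboux identity
`∑_{m<n} conj (φ_m t) φ_m z = (1 - B_n z · conj (B_n t)) / (1 - z · conj t)` (`‖t‖ ≤ 1`)
telescopes from the one-factor identity
`1 - b_w z · conj (b_w t) = (1 - ‖w‖²)(1 - z conj t) / ((1 - conj w z)(1 - w conj t))`.
Multiplying it by `f t` and averaging over the circle turns the left side into the partial
Takenaka–Malmquist sum, so the theorem reduces to the Cauchy formula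
`f z = ∫_T f t / (1 - z conj t) dσ(t)` for the boundary values of `f`. That formula holds for the
dilations `f (ρ ·)`, `ρ < 1`, and passes to the limit `ρ → 1` by Vitali's theorem: the uniform
`L²` bound on circles makes the dilations uniformly integrable, and they converge a.e. to the
boundary values. -/

open ComplexConjugate Filter Metric Topology
open scoped ENNReal NNReal Real

noncomputable def blaschkeFactor (w z : ℂ) : ℂ := (z - w) / (1 - conj w * z)

lemma Blaschke_succ (a : ℕ → ℂ) (k : ℕ) (z : ℂ) :
    Blaschke a (k + 1) z = Blaschke a k z * blaschkeFactor (a k) z :=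
  prod_range_succ _ _

lemma one_sub_mul_ne_zero_of_norm_lt {u v : ℂ} (hu : ‖u‖ < 1) (hv : ‖v‖ ≤ 1) :
    1 - u * v ≠ 0 := by
  rw [sub_ne_zero]
  intro h
  have : ‖u‖ * ‖v‖ = 1 := by rw [← norm_mul, ← h, norm_one]
  nlinarith [norm_nonneg u, norm_nonneg v]

lemma norm_unitFactor (c : ℂ) : ‖unitFactor c‖ = 1 := by
  by_cases hc : c = 0 <;> simp [unitFactor, hc]

lemma one_sub_blaschkeFactor_mul_conj {w z t : ℂ} (hw : ‖w‖ < 1) (hz : ‖z‖ ≤ 1)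
    (ht : ‖t‖ ≤ 1) :
    1 - blaschkeFactor w z * conj (blaschkeFactor w t) =
      (1 - ‖w‖ ^ 2) * (1 - z * conj t) / ((1 - conj w * z) * (1 - w * conj t)) := by
  have hwz : 1 - z * conj w ≠ 0 := by
    rw [mul_comm]; exact one_sub_mul_ne_zero_of_norm_lt (by simpa using hw) hz
  have hwt : 1 - w * conj t ≠ 0 := one_sub_mul_ne_zero_of_norm_lt hw (by simpa using ht)
  rw [← mul_conj']
  simp only [blaschkeFactor, map_div₀, map_sub, map_mul, map_one, conj_conj]
  field_simp
  ring

lemma TM_eq_mul_Blaschke (a : ℕ → ℂ) (k : ℕ) (z : ℂ) :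
    TM a k z = (∏ j ∈ range k, -unitFactor (a j)) *
      ((√(1 - ‖a k‖ ^ 2) : ℂ) / (1 - conj (a k) * z)) * Blaschke a k z := by
  rw [TM, Blaschke, prod_mul_distrib]
  ring

lemma conj_TM_mul_TM (a : ℕ → ℂ) (k : ℕ) (ha : ‖a k‖ < 1) {z t : ℂ} (hz : ‖z‖ < 1)
    (ht : ‖t‖ ≤ 1) :
    conj (TM a k t) * TM a k z =
      (Blaschke a k z * conj (Blaschke a k t) -
        Blaschke a (k + 1) z * conj (Blaschke a (k + 1) t)) / (1 - z * conj t) := by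
  have hζ : conj (∏ j ∈ range k, -unitFactor (a j)) * ∏ j ∈ range k, -unitFactor (a j) = 1 := by
    rw [conj_mul', norm_prod]
    simp [norm_unitFactor]
  have hs : ((√(1 - ‖a k‖ ^ 2) : ℝ) : ℂ) ^ 2 = 1 - ‖a k‖ ^ 2 := by
    norm_cast
    exact Real.sq_sqrt (by nlinarith [norm_nonneg (a k)])
  have hzt : 1 - z * conj t ≠ 0 := one_sub_mul_ne_zero_of_norm_lt hz (by simpa using ht)
  rw [eq_div_iff hzt, Blaschke_succ, Blaschke_succ, map_mul, TM_eq_mul_Blaschke,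
    TM_eq_mul_Blaschke]
  generalize ∏ j ∈ range k, -unitFactor (a j) = ζ at hζ ⊢
  calc _ = conj ζ * ζ * ((√(1 - ‖a k‖ ^ 2) : ℝ) : ℂ) ^ 2 * (1 - z * conj t) /
        (1 - conj (a k) * z) / (1 - a k * conj t) * Blaschke a k z * conj (Blaschke a k t) := by
        simp only [map_mul, map_div₀, map_sub, map_one, conj_ofReal, conj_conj]
        ring
    _ = _ := by
        rw [hζ, hs, one_mul, div_div, ← one_sub_blaschkeFactor_mul_conj ha hz.le ht]
        ring

lemma sum_conj_TM_mul_TM (a : ℕ → ℂ) (ha : ∀ k, ‖a k‖ < 1) (n : ℕ) {z t : ℂ} (hz : ‖z‖ < 1)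
    (ht : ‖t‖ ≤ 1) :
    ∑ m ∈ range n, conj (TM a m t) * TM a m z =
      (1 - Blaschke a n z * conj (Blaschke a n t)) / (1 - z * conj t) := by
  simp only [conj_TM_mul_TM a _ (ha _) hz ht, ← sum_div,
    sum_range_sub' (fun k => Blaschke a k z * conj (Blaschke a k t))]
  simp [Blaschke]

lemma div_one_sub_mul_conj_eq_sum_TM (a : ℕ → ℂ) (ha : ∀ k, ‖a k‖ < 1) (n : ℕ) {z t : ℂ}
    (hz : ‖z‖ < 1) (ht : ‖t‖ ≤ 1) (w : ℂ) :
    w / (1 - z * conj t) = ∑ m ∈ range n, TM a m z * (w * conj (TM a m t)) +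
      Blaschke a n z * (w * (conj (Blaschke a n t) * (1 - z * conj t)⁻¹)) := by
  have hzt := one_sub_mul_ne_zero_of_norm_lt hz (by simpa using ht)
  have hsum : ∑ m ∈ range n, TM a m z * (w * conj (TM a m t)) =
      w * ∑ m ∈ range n, conj (TM a m t) * TM a m z := by
    rw [mul_sum]
    exact sum_congr rfl fun _ _ => by ring
  rw [hsum, sum_conj_TM_mul_TM a ha n hz ht]
  field_simp
  ring

lemma continuousOn_blaschkeFactor {w : ℂ} (hw : ‖w‖ < 1) :
    ContinuousOn (blaschkeFactor w) (closedBall 0 1) :=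
  (continuousOn_id.sub continuousOn_const).div (by fun_prop) fun t ht =>
    one_sub_mul_ne_zero_of_norm_lt (by simpa using hw) (by simpa using ht)

lemma continuousOn_Blaschke {a : ℕ → ℂ} (ha : ∀ k, ‖a k‖ < 1) (k : ℕ) :
    ContinuousOn (Blaschke a k) (closedBall 0 1) := by
  have : Blaschke a k = fun z => ∏ j ∈ range k, blaschkeFactor (a j) z := rfl
  rw [this]
  exact continuousOn_finsetProd _ fun j _ => continuousOn_blaschkeFactor (ha j)

lemma continuousOn_TM {a : ℕ → ℂ} (ha : ∀ k, ‖a k‖ < 1) (k : ℕ) :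
    ContinuousOn (TM a k) (closedBall 0 1) := by
  rw [funext (TM_eq_mul_Blaschke a k)]
  refine (continuousOn_const.mul (continuousOn_const.div (by fun_prop) fun t ht => ?_)).mul
    (continuousOn_Blaschke ha k)
  exact one_sub_mul_ne_zero_of_norm_lt (by simpa using ha k) (by simpa using ht)

lemma continuousOn_inv_one_sub_mul_conj {z : ℂ} (hz : ‖z‖ < 1) :
    ContinuousOn (fun t => (1 - z * conj t)⁻¹) (closedBall 0 1) :=
  ContinuousOn.inv₀ (by fun_prop) fun t ht =>
    one_sub_mul_ne_zero_of_norm_lt hz (by simpa using ht)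

section UniformIntegrability

variable {α E : Type*} [MeasurableSpace α] {μ : Measure α} [NormedAddCommGroup E]

lemma uniformIntegrable_one_of_lintegral_enorm_sq_le [IsFiniteMeasure μ] {ι : Type*}
    {F : ι → α → E} (hF : ∀ i, AEStronglyMeasurable (F i) μ) {A : ℝ≥0∞} (hA : A ≠ ∞)
    (hbound : ∀ i, ∫⁻ x, ‖F i x‖ₑ ^ 2 ∂μ ≤ A) : UniformIntegrable F 1 μ := by
  refine uniformIntegrable_of le_rfl ENNReal.one_ne_top hF fun ε hε => ?_
  obtain ⟨δ, hδ, hδA⟩ := ENNReal.exists_nnreal_pos_mul_lt hA (ENNReal.ofReal_pos.2 hε).ne'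
  refine ⟨δ⁻¹, fun i => ?_⟩
  -- Chebyshev: where `‖F i‖ ≥ δ⁻¹`, `‖F i‖ ≤ δ ‖F i‖²`.
  have htail : ∀ x, ‖{x | δ⁻¹ ≤ ‖F i x‖₊}.indicator (F i) x‖ₑ ≤ δ * ‖F i x‖ₑ ^ 2 := by
    intro x
    rw [enorm_indicator_eq_indicator_enorm]
    refine Set.indicator_apply_le' (fun hx => ?_) fun _ => zero_le
    have h1 : 1 ≤ δ * ‖F i x‖₊ := by rwa [← inv_le_iff_one_le_mul₀' hδ]
    rw [enorm_eq_nnnorm]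
    norm_cast
    calc ‖F i x‖₊ = 1 * ‖F i x‖₊ := (one_mul _).symm
      _ ≤ δ * ‖F i x‖₊ * ‖F i x‖₊ := by gcongr
      _ = δ * ‖F i x‖₊ ^ 2 := by ring
  calc eLpNorm ({x | δ⁻¹ ≤ ‖F i x‖₊}.indicator (F i)) 1 μ
      ≤ ∫⁻ x, δ * ‖F i x‖ₑ ^ 2 ∂μ := by
        rw [eLpNorm_one_eq_lintegral_enorm]
        exact lintegral_mono htail
    _ ≤ δ * A := by
        rw [lintegral_const_mul' _ _ ENNReal.coe_ne_top]
        gcongr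
        exact hbound i
    _ ≤ ENNReal.ofReal ε := hδA.le

lemma MeasureTheory.UniformIntegrable.tendsto_integral_of_ae_tendsto [IsFiniteMeasure μ]
    [NormedSpace ℝ E] {F : ℕ → α → E} {g : α → E} (hUI : UniformIntegrable F 1 μ)
    (hlim : ∀ᵐ x ∂μ, Tendsto (F · x) atTop (𝓝 (g x))) :
    Tendsto (fun n => ∫ x, F n x ∂μ) atTop (𝓝 (∫ x, g x ∂μ)) := by
  have hg := hUI.integrable_of_ae_tendsto hlim
  exact tendsto_integral_of_L1' g hg.1
    (Eventually.of_forall fun n => memLp_one_iff_integrable.1 (hUI.memLp n))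
    (tendsto_Lp_finite_of_tendsto_ae le_rfl ENNReal.one_ne_top hUI.1
      (memLp_one_iff_integrable.2 hg) hUI.2.1 hlim)

end UniformIntegrability

lemma circleAvg_eq_circleAverage (g : ℂ → ℂ) : circleAvg g = Real.circleAverage g 0 1 := by
  simp [circleAvg, Real.circleAverage, circleMap_zero, Complex.real_smul]

lemma circleAvgR_eq_circleAverage (g : ℂ → ℝ) : circleAvgR g = Real.circleAverage g 0 1 := by
  simp [circleAvgR, Real.circleAverage, circleMap_zero]

lemma circleAverage_eq_integral_Ioc {E : Type*} [NormedAddCommGroup E] [NormedSpace ℝ E]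
    (g : ℂ → E) :
    Real.circleAverage g 0 1 = (2 * π)⁻¹ • ∫ θ in Set.Ioc 0 (2 * π), g (circleMap 0 1 θ) := by
  rw [Real.circleAverage, intervalIntegral.integral_of_le Real.two_pi_pos.le]

lemma ContinuousOn.continuous_comp_circleMap {E : Type*} [TopologicalSpace E] {g : ℂ → E}
    (hg : ContinuousOn g (sphere 0 1)) : Continuous fun θ => g (circleMap 0 1 θ) :=
  hg.comp_continuous (continuous_circleMap 0 1) fun θ => by simp

lemma lintegral_enorm_sq_circleMap_eq {g : ℂ → ℂ} (hg : ContinuousOn g (sphere 0 1)) :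
    ∫⁻ θ in Set.Ioc 0 (2 * π), ‖g (circleMap 0 1 θ)‖ₑ ^ 2 =
      ENNReal.ofReal (2 * π * Real.circleAverage (fun t => ‖g t‖ ^ 2) 0 1) := by
  have hint : Continuous fun θ => ‖g (circleMap 0 1 θ)‖ ^ 2 :=
    (hg.norm.pow 2).continuous_comp_circleMap
  rw [circleAverage_eq_integral_Ioc, smul_eq_mul, ← mul_assoc,
    mul_inv_cancel₀ Real.two_pi_pos.ne', one_mul,
    ofReal_integral_eq_lintegral_ofReal hint.integrableOn_Ioc
      (Eventually.of_forall fun _ => sq_nonneg _)]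
  simp [ENNReal.ofReal_pow, ofReal_norm]

lemma DiffContOnCl.circleAverage_div_one_sub_mul_conj {g : ℂ → ℂ}
    (hg : DiffContOnCl ℂ g (ball 0 1)) {z : ℂ} (hz : ‖z‖ < 1) :
    Real.circleAverage (fun t => g t / (1 - z * conj t)) 0 1 = g z := by
  rw [← DiffContOnCl.circleAverage_smul_div (f := g) (c := 0) (R := 1) (by rwa [abs_one])
    (by simpa)]
  refine Real.circleAverage_congr_sphere fun t ht => ?_
  have ht1 : ‖t‖ = 1 := by simpa using ht
  have ht0 : t ≠ 0 := by rintro rfl; simp at ht1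
  have htz : t - z ≠ 0 := sub_ne_zero.2 fun h => by rw [h] at ht1; linarith
  rw [← inv_eq_conj ht1]
  simp only [sub_zero, smul_eq_mul]
  field_simp

lemma differentiableOn_dilate {f : ℂ → ℂ} (hf : DifferentiableOn ℂ f (ball 0 1)) {ρ : ℝ}
    (h0 : 0 ≤ ρ) (h1 : ρ < 1) : DifferentiableOn ℂ (fun t => f (ρ * t)) (closedBall 0 1) := by
  refine hf.comp (by fun_prop) fun t ht => ?_
  have : ‖t‖ ≤ 1 := by simpa using ht
  simp only [mem_ball_zero_iff, norm_mul, norm_real, Real.norm_of_nonneg h0]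
  nlinarith [norm_nonneg t]

lemma exists_seq_mem_Ioo_tendsto_one :
    ∃ r : ℕ → ℝ, (∀ k, r k ∈ Set.Ioo 0 1) ∧ Tendsto r atTop (𝓝[<] 1) := by
  obtain ⟨r, -, hr, hlim⟩ := exists_seq_strictMono_tendsto' (zero_lt_one' ℝ)
  exact ⟨r, hr, tendsto_nhdsWithin_iff.2 ⟨hlim, Eventually.of_forall fun k => (hr k).2⟩⟩

def HasRadialBoundaryValues (f : ℂ → ℂ) : Prop :=
  ∀ᵐ θ : ℝ, Tendsto (fun ρ : ℝ => f (ρ * circleMap 0 1 θ)) (𝓝[<] 1) (𝓝 (f (circleMap 0 1 θ)))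

section Hardy

variable {f : ℂ → ℂ} {C : ℝ}

lemma uniformIntegrable_mul_dilate (hf : DifferentiableOn ℂ f (ball 0 1))
    (hC : ∀ ρ : ℝ, 0 < ρ → ρ < 1 → Real.circleAverage (fun t => ‖f (ρ * t)‖ ^ 2) 0 1 ≤ C)
    {W : ℂ → ℂ} (hW : ContinuousOn W (sphere 0 1)) {r : ℕ → ℝ} (hr : ∀ k, r k ∈ Set.Ioo 0 1) :
    UniformIntegrable (fun k θ => f (r k * circleMap 0 1 θ) * W (circleMap 0 1 θ)) 1
      (volume.restrict (Set.Ioc 0 (2 * π))) := by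
  obtain ⟨M, hM⟩ := (isCompact_sphere (0 : ℂ) 1).exists_bound_of_continuousOn hW
  have hdil : ∀ k, ContinuousOn (fun t => f (r k * t)) (sphere 0 1) := fun k =>
    (differentiableOn_dilate hf (hr k).1.le (hr k).2).continuousOn.mono sphere_subset_closedBall
  refine uniformIntegrable_one_of_lintegral_enorm_sq_le
    (fun k => (((hdil k).mul hW).continuous_comp_circleMap).aestronglyMeasurable)
    ENNReal.ofReal_ne_top (A := ENNReal.ofReal (2 * π * (M ^ 2 * C))) fun k => ?_
  rw [lintegral_enorm_sq_circleMap_eq (g := fun t => f (r k * t) * W t) ((hdil k).mul hW)]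
  gcongr
  calc Real.circleAverage (fun t => ‖f (r k * t) * W t‖ ^ 2) 0 1
      ≤ Real.circleAverage (fun t => M ^ 2 • ‖f (r k * t)‖ ^ 2) 0 1 := by
        refine Real.circleAverage_mono
          ((((hdil k).mul hW).norm.pow 2).circleIntegrable zero_le_one)
          ((((hdil k).norm.pow 2).const_smul (M ^ 2)).circleIntegrable zero_le_one)
          fun t ht => ?_
        rw [abs_one] at ht
        rw [norm_mul, mul_pow, smul_eq_mul, mul_comm (M ^ 2)]
        gcongr
        exact hM t ht
    _ ≤ M ^ 2 * C := by
        rw [Real.circleAverage_fun_smul, smul_eq_mul]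
        exact mul_le_mul_of_nonneg_left (hC _ (hr k).1 (hr k).2) (sq_nonneg M)

lemma ae_tendsto_mul_dilate (hrad : HasRadialBoundaryValues f) (W : ℂ → ℂ) {r : ℕ → ℝ}
    (hr : Tendsto r atTop (𝓝[<] 1)) :
    ∀ᵐ θ ∂volume.restrict (Set.Ioc 0 (2 * π)),
      Tendsto (fun k => f (r k * circleMap 0 1 θ) * W (circleMap 0 1 θ)) atTop
        (𝓝 (f (circleMap 0 1 θ) * W (circleMap 0 1 θ))) :=
  ae_restrict_of_ae (hrad.mono fun _ hθ => (hθ.comp hr).mul_const _)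

lemma circleIntegrable_mul_of_hasRadialBoundaryValues (hf : DifferentiableOn ℂ f (ball 0 1))
    (hC : ∀ ρ : ℝ, 0 < ρ → ρ < 1 → Real.circleAverage (fun t => ‖f (ρ * t)‖ ^ 2) 0 1 ≤ C)
    (hrad : HasRadialBoundaryValues f) {W : ℂ → ℂ} (hW : ContinuousOn W (sphere 0 1)) :
    CircleIntegrable (fun t => f t * W t) 0 1 := by
  obtain ⟨r, hr, hlim⟩ := exists_seq_mem_Ioo_tendsto_one
  exact (intervalIntegrable_iff_integrableOn_Ioc_of_le Real.two_pi_pos.le).2 <|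
    (uniformIntegrable_mul_dilate hf hC hW hr).integrable_of_ae_tendsto
      (ae_tendsto_mul_dilate hrad W hlim)

lemma tendsto_circleAverage_mul_dilate (hf : DifferentiableOn ℂ f (ball 0 1))
    (hC : ∀ ρ : ℝ, 0 < ρ → ρ < 1 → Real.circleAverage (fun t => ‖f (ρ * t)‖ ^ 2) 0 1 ≤ C)
    (hrad : HasRadialBoundaryValues f) {W : ℂ → ℂ} (hW : ContinuousOn W (sphere 0 1))
    {r : ℕ → ℝ} (hr : ∀ k, r k ∈ Set.Ioo 0 1) (hlim : Tendsto r atTop (𝓝[<] 1)) :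
    Tendsto (fun k => Real.circleAverage (fun t => f (r k * t) * W t) 0 1) atTop
      (𝓝 (Real.circleAverage (fun t => f t * W t) 0 1)) := by
  simp only [circleAverage_eq_integral_Ioc]
  exact ((uniformIntegrable_mul_dilate hf hC hW hr).tendsto_integral_of_ae_tendsto
    (ae_tendsto_mul_dilate hrad W hlim)).const_smul _

theorem circleAverage_div_one_sub_mul_conj_of_hasRadialBoundaryValues
    (hf : DifferentiableOn ℂ f (ball 0 1))
    (hC : ∀ ρ : ℝ, 0 < ρ → ρ < 1 → Real.circleAverage (fun t => ‖f (ρ * t)‖ ^ 2) 0 1 ≤ C)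
    (hrad : HasRadialBoundaryValues f) {z : ℂ} (hz : ‖z‖ < 1) :
    Real.circleAverage (fun t => f t / (1 - z * conj t)) 0 1 = f z := by
  obtain ⟨r, hr, hlim⟩ := exists_seq_mem_Ioo_tendsto_one
  have hdil : ∀ k, Real.circleAverage (fun t => f (r k * t) * (1 - z * conj t)⁻¹) 0 1 =
      f (r k * z) := fun k => by
    simpa only [div_eq_mul_inv] using ((differentiableOn_dilate hf (hr k).1.le
      (hr k).2).diffContOnCl_ball subset_rfl).circleAverage_div_one_sub_mul_conj hz
  have hfz : Tendsto (fun k => f (r k * z)) atTop (𝓝 (f z)) := by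
    have hrz : Tendsto (fun k => (r k : ℂ) * z) atTop (𝓝 z) := by
      simpa using
        ((continuous_ofReal.tendsto 1).comp (tendsto_nhdsWithin_iff.1 hlim).1).mul_const z
    exact (hf.differentiableAt (isOpen_ball.mem_nhds (by simpa))).continuousAt.tendsto.comp hrz
  have hlimit := (tendsto_circleAverage_mul_dilate hf hC hrad
    ((continuousOn_inv_one_sub_mul_conj hz).mono sphere_subset_closedBall) hr hlim).congr hdil
  simpa only [div_eq_mul_inv] using tendsto_nhds_unique hlimit hfz

end Hardy

theorem hardy_representation_general (a : ℕ → ℂ) (ha : ∀ k, ‖a k‖ < 1)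
    (f : ℂ → ℂ)
    (hf : DifferentiableOn ℂ f (Metric.ball (0:ℂ) 1))
    (hH2 : ∃ C : ℝ, ∀ ρ : ℝ, 0 < ρ → ρ < 1 →
      circleAvgR (fun t => ‖f ((ρ:ℂ) * t)‖ ^ 2) ≤ C)
    (hbdry : ∀ᵐ θ : ℝ, Filter.Tendsto
      (fun ρ : ℝ => f ((ρ:ℂ) * Complex.exp (θ * Complex.I)))
      (nhdsWithin 1 (Set.Iio 1)) (nhds (f (Complex.exp (θ * Complex.I)))))
    (n : ℕ) (z : ℂ) (hz : ‖z‖ < 1) :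
    f z = (∑ m ∈ Finset.range n, fourierCoef a f m * TM a m z) +
      Blaschke a n z *
        circleAvg (fun t =>
          (starRingEnd ℂ) (Blaschke a n t) * f t / (1 - z * (starRingEnd ℂ) t)) := by
  obtain ⟨C, hC⟩ := hH2
  simp only [circleAvgR_eq_circleAverage] at hC
  have hrad : HasRadialBoundaryValues f := by
    simpa [HasRadialBoundaryValues, circleMap_zero] using hbdry
  have hint {W : ℂ → ℂ} (hW : ContinuousOn W (closedBall 0 1)) (c : ℂ) :
      CircleIntegrable (fun t => c • (f t * W t)) 0 1 :=
    (circleIntegrable_mul_of_hasRadialBoundaryValues hf hC hrad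
      (hW.mono sphere_subset_closedBall)).const_fun_smul
  have hTM (m : ℕ) : ContinuousOn (fun t => conj (TM a m t)) (closedBall 0 1) :=
    continuous_conj.comp_continuousOn (continuousOn_TM ha m)
  have hrem : ContinuousOn (fun t => conj (Blaschke a n t) * (1 - z * conj t)⁻¹)
      (closedBall 0 1) :=
    (continuous_conj.comp_continuousOn (continuousOn_Blaschke ha n)).mul
      (continuousOn_inv_one_sub_mul_conj hz)
  have hexpand : Set.EqOn (fun t => f t / (1 - z * conj t))
      (fun t => (∑ m ∈ range n, TM a m z • (f t * conj (TM a m t))) +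
        Blaschke a n z • (f t * (conj (Blaschke a n t) * (1 - z * conj t)⁻¹)))
      (sphere 0 |1|) := fun t ht => by
    rw [abs_one, mem_sphere_zero_iff_norm] at ht
    simpa only [smul_eq_mul] using div_one_sub_mul_conj_eq_sum_TM a ha n hz ht.le (f t)
  rw [← circleAverage_div_one_sub_mul_conj_of_hasRadialBoundaryValues hf hC hrad hz,
    Real.circleAverage_congr_sphere hexpand,
    Real.circleAverage_fun_add (CircleIntegrable.fun_sum _ fun m _ => hint (hTM m) _)
      (hint hrem _),
    Real.circleAverage_fun_sum fun m _ => hint (hTM m) _]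
  simp only [Real.circleAverage_fun_smul]
  simp only [fourierCoef, circleAvg_eq_circleAverage, smul_eq_mul]
  congr 1
  · exact sum_congr rfl fun _ _ => mul_comm _ _
  · congr 2
    ext t
    ring

/-- representation formula for Hardy space functions: if `f ∈ H²(D)`, i.e.
`f` is analytic on the unit disk with uniformly bounded quadratic means over circles of radius
`ρ < 1`, and the values of `f` on the unit circle are its (nontangential/radial) boundary
values, then for every `n ≥ 1` and every `z ∈ D`,
`f(z) = ∑_{m=0}^{n-1} c_m(f)·φ_m(z) + B_n(z)·∫_T conj(B_n(t))·f(t)/(1 - z·conj(t)) dσ(t)`. -/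
theorem hardy_representation (a : ℕ → ℂ) (ha : ∀ k, ‖a k‖ < 1)
    (f : ℂ → ℂ)
    (hf : DifferentiableOn ℂ f (Metric.ball (0:ℂ) 1))
    (hH2 : ∃ C : ℝ, ∀ ρ : ℝ, 0 < ρ → ρ < 1 →
      circleAvgR (fun t => ‖f ((ρ:ℂ) * t)‖ ^ 2) ≤ C)
    (hbdry : ∀ᵐ θ : ℝ, Filter.Tendsto
      (fun ρ : ℝ => f ((ρ:ℂ) * Complex.exp (θ * Complex.I)))
      (nhdsWithin 1 (Set.Iio 1)) (nhds (f (Complex.exp (θ * Complex.I)))))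
    (n : ℕ) (hn : 1 ≤ n) (z : ℂ) (hz : ‖z‖ < 1) :
    f z = (∑ m ∈ Finset.range n, fourierCoef a f m * TM a m z) +
      Blaschke a n z *
        circleAvg (fun t =>
          (starRingEnd ℂ) (Blaschke a n t) * f t / (1 - z * (starRingEnd ℂ) t)) :=
  hardy_representation_general a ha f hf hH2 hbdry n z hz
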